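/- Let α be an irrational real number and ρ ∈ ℝ, and let a(n) = ⌊α(n+1) + ρ⌋ − ⌊αn + ρ⌋ − ⌊α⌋. Then there is no periodic sequence p : ℕ → ℤ such that the set {n ∈ ℕ : a(n) ≠ p(n)} has upper Banach density zero. -/

import Mathlib

/-!
On a window of length `L` the Sturmian sequence telescopes: its sum is
`⌊α (m + L) + ρ⌋ - ⌊α m + ρ⌋ - L ⌊α⌋`, which lies within `1` of `L · fract α`. A set of upper
Banach density zero misses arbitrarily long windows, so if `a` agreed with a `d`-periodic `p`
off such a set, then for every `k` a window of length `k d` would give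
`|k S - k d · fract α| < 1`, where `S` is the sum of `p` over one period. Hence
`fract α = S / d` would be rational.
-/

/-- A set of natural numbers has upper Banach density zero. -/
def UBDZero (Z : Set ℕ) : Prop :=
  ∀ ε : ℝ, 0 < ε → ∃ l₀ : ℕ, ∀ m l : ℕ, l₀ ≤ l →
    (Nat.card (Z ∩ Set.Ico m (m + l) : Set ℕ) : ℝ) ≤ ε * l

open Finset

noncomputable def sturmian (α ρ : ℝ) (n : ℕ) : ℤ :=
  ⌊α * (n + 1) + ρ⌋ - ⌊α * n + ρ⌋ - ⌊α⌋

lemma sum_range_sturmian (α ρ : ℝ) (m L : ℕ) :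
    ∑ i ∈ range L, sturmian α ρ (m + i) = ⌊α * (m + L) + ρ⌋ - ⌊α * m + ρ⌋ - L * ⌊α⌋ := by
  induction L with
  | zero => simp
  | succ L ih =>
    rw [sum_range_succ, ih, sturmian]
    push_cast
    ring_nf

lemma abs_sum_range_sturmian_sub_lt_one (α ρ : ℝ) (m L : ℕ) :
    |((∑ i ∈ range L, sturmian α ρ (m + i) : ℤ) : ℝ) - L * Int.fract α| < 1 := by
  rw [← Int.self_sub_floor, sum_range_sturmian, abs_sub_lt_iff]
  have h₁ := Int.floor_le (α * (m + L) + ρ)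
  have h₂ := Int.lt_floor_add_one (α * (m + L) + ρ)
  have h₃ := Int.floor_le (α * m + ρ)
  have h₄ := Int.lt_floor_add_one (α * m + ρ)
  push_cast
  constructor <;> linarith

namespace Function.Periodic

variable {M : Type*} [AddCommMonoid M] {p : ℕ → M} {d : ℕ}

lemma sum_range_shift (hp : Periodic p d) (m : ℕ) :
    ∑ i ∈ range d, p (m + i) = ∑ i ∈ range d, p i := by
  induction m with
  | zero => simp
  | succ m ih =>
    rw [← ih]
    cases d with
    | zero => simp
    | succ e =>
      rw [sum_range_succ, sum_range_succ', add_zero, add_right_comm, add_assoc m e 1, hp m]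
      exact congrArg (· + p m) (sum_congr rfl fun i _ => by rw [add_right_comm, add_assoc])

lemma sum_range_nat_mul (hp : Periodic p d) (m k : ℕ) :
    ∑ i ∈ range (k * d), p (m + i) = k • ∑ i ∈ range d, p i := by
  induction k with
  | zero => simp
  | succ k ih =>
    have hshift : ∀ i, p (m + (k * d + i)) = p (m + i) := fun i => by
      simpa [add_assoc, add_comm, add_left_comm] using hp.nat_mul k (m + i)
    rw [add_mul, one_mul, Finset.sum_range_add, ih]
    simp only [hshift]
    rw [hp.sum_range_shift, succ_nsmul]

end Function.Periodic

lemma le_natCard_inter_Ico_of_forall_exists_mem {Z : Set ℕ} {L : ℕ}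
    (hZ : ∀ m, ∃ n ∈ Set.Ico m (m + L), n ∈ Z) (m N : ℕ) :
    N ≤ Nat.card (Z ∩ Set.Ico m (m + N * L) : Set ℕ) := by
  choose f hfIco hfZ using hZ
  set g : ℕ → ℕ := fun j => f (m + j * L)
  have hg : ∀ j, m + j * L ≤ g j ∧ g j < m + (j + 1) * L := fun j => by
    have := hfIco (m + j * L)
    rw [Set.mem_Ico] at this
    constructor <;> nlinarith
  have hgmono : StrictMono g := strictMono_nat_of_lt_succ fun j => (hg j).2.trans_le (hg (j + 1)).1
  have hmaps : ∀ j ∈ Set.Iio N, g j ∈ Z ∩ Set.Ico m (m + N * L) := fun j hj => by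
    refine ⟨hfZ _, (hg j).1.trans' (Nat.le_add_right _ _), (hg j).2.trans_le ?_⟩
    have : j + 1 ≤ N := hj
    gcongr
  calc N = (Set.Iio N).ncard := (Set.ncard_Iio_nat N).symm
    _ ≤ _ := Set.ncard_le_ncard_of_injOn g hmaps hgmono.injective.injOn
      ((Set.finite_Ico _ _).inter_of_right Z)

lemma UBDZero.exists_forall_Ico_notMem {Z : Set ℕ} (hZ : UBDZero Z) (L : ℕ) :
    ∃ m, ∀ n ∈ Set.Ico m (m + L), n ∉ Z := by
  by_contra! hmeet
  have hL : 1 ≤ L := by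
    obtain ⟨n, hn, -⟩ := hmeet 0
    rw [Set.mem_Ico] at hn
    omega
  -- if every window of length `L` meets `Z`, its density is at least `1 / L`
  obtain ⟨l₀, hl₀⟩ := hZ (1 / (L + 1)) (by positivity)
  set N := l₀ + 1
  have hupper := hl₀ 0 (N * L) ((Nat.le_succ l₀).trans (Nat.le_mul_of_pos_right N hL))
  have hlower := le_natCard_inter_Ico_of_forall_exists_mem hmeet 0 N
  have hlowerR : (N : ℝ) ≤ 1 / (L + 1) * (N * L : ℕ) := (Nat.cast_le.mpr hlower).trans hupper
  have hN : (0 : ℝ) < N := by positivity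
  rw [div_mul_eq_mul_div, le_div_iff₀ (by positivity)] at hlowerR
  push_cast at hlowerR
  nlinarith

lemma eq_zero_of_forall_nat_mul_abs_lt_one {x : ℝ} (h : ∀ k : ℕ, k * |x| < 1) : x = 0 := by
  by_contra hx
  obtain ⟨k, hk⟩ := exists_nat_gt (1 / |x|)
  rw [div_lt_iff₀ (abs_pos.mpr hx)] at hk
  exact (h k).not_gt hk

theorem sturmian_not_almost_periodic (α ρ : ℝ) (hα : Irrational α) (a : ℕ → ℤ)
    (ha : ∀ n : ℕ, a n = ⌊α * (n + 1) + ρ⌋ - ⌊α * n + ρ⌋ - ⌊α⌋) :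
    ¬ ∃ p : ℕ → ℤ, (∃ d : ℕ, 1 ≤ d ∧ ∀ n, p (n + d) = p n) ∧
      UBDZero {n | a n ≠ p n} := by
  rintro ⟨p, ⟨d, hd, hp⟩, hZ⟩
  obtain rfl : a = sturmian α ρ := funext ha
  set S := ∑ i ∈ range d, p i
  have hwindow : ∀ k : ℕ, k * |(S : ℝ) - d * Int.fract α| < 1 := fun k => by
    obtain ⟨m, hm⟩ := hZ.exists_forall_Ico_notMem (k * d)
    have hagree : ∑ i ∈ range (k * d), sturmian α ρ (m + i) = k * S := by
      rw [← nsmul_eq_mul, ← Function.Periodic.sum_range_nat_mul hp]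
      refine sum_congr rfl fun i hi => not_not.mp (hm _ ?_)
      rw [mem_range] at hi
      exact ⟨Nat.le_add_right _ _, by omega⟩
    have hclose := abs_sum_range_sturmian_sub_lt_one α ρ m (k * d)
    rw [hagree] at hclose
    push_cast at hclose
    rwa [mul_assoc, ← mul_sub, abs_mul, Nat.abs_cast] at hclose
  have hfract : (d : ℝ) * Int.fract α = S := by
    linarith [sub_eq_zero.mp (eq_zero_of_forall_nat_mul_abs_lt_one hwindow)]
  rw [← Int.self_sub_floor] at hfract
  exact ((hα.sub_intCast _).natCast_mul (by omega)).ne_int S hfract
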